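/- Let L be the 3-dimensional vector space with basis {e₁,e₂,e₃}, bracket [e₁,e₃] = e₂, [e₃,e₃] = e₁, and α a linear map of the form α(e₁) = a₁₁e₁ + a₂₁e₂, α(e₂) = a₁₂e₁ + a₂₂e₂, α(e₃) = a₁₃e₁ + a₂₃e₂ + a₃₃e₃. Then (L, [·,·], α) satisfies the Hom-Leibniz identity [α(x),[y,z]] = [[x,y],α(z)] − [[x,z],α(y)] for all x,y,z ∈ L. -/

import Mathlib

/-- Basis vectors of the 3-dimensional example. -/
noncomputable def e3v (i : Fin 3) : Fin 3 → ℝ := Pi.single i 1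

/-- The bracket with `[e₁,e₃] = e₂`, `[e₃,e₃] = e₁`, all other brackets of basis
elements zero, extended bilinearly. -/
noncomputable def br3 (x y : Fin 3 → ℝ) : Fin 3 → ℝ :=
  (x 0 * y 2) • e3v 1 + (x 2 * y 2) • e3v 0

/-- A linear map with `α(e₁) = a₁₁e₁ + a₂₁e₂`, `α(e₂) = a₁₂e₁ + a₂₂e₂`,
`α(e₃) = a₁₃e₁ + a₂₃e₂ + a₃₃e₃`. -/
noncomputable def alpha9 (a11 a12 a13 a21 a22 a23 a33 : ℝ) (x : Fin 3 → ℝ) : Fin 3 → ℝ :=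
  ![a11 * x 0 + a12 * x 1 + a13 * x 2,
    a21 * x 0 + a22 * x 1 + a23 * x 2,
    a33 * x 2]

/-!
Every bracket `[x, y]` has zero `e₃`-coordinate and `[u, w]` only sees the `e₃`-coordinate
of `w`, so the left side vanishes, while `[[x, y], w] = x₃ y₃ w₃ e₂`. Since `α` scales the
`e₃`-coordinate by `a₃₃`, both terms on the right equal `a₃₃ x₃ y₃ z₃ e₂`.
-/

lemma br3_apply_two (x y : Fin 3 → ℝ) : br3 x y 2 = 0 := by
  simp [br3, e3v]

lemma br3_eq_zero_of_apply_two {y : Fin 3 → ℝ} (hy : y 2 = 0) (x : Fin 3 → ℝ) : br3 x y = 0 := by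
  simp [br3, hy]

lemma br3_br3 (x y w : Fin 3 → ℝ) : br3 (br3 x y) w = (x 2 * y 2 * w 2) • e3v 1 := by
  simp [br3, e3v, mul_assoc]

lemma alpha9_apply_two (a11 a12 a13 a21 a22 a23 a33 : ℝ) (x : Fin 3 → ℝ) :
    alpha9 a11 a12 a13 a21 a22 a23 a33 x 2 = a33 * x 2 := rfl

/-- With any `α` of the above triangular form, `(L,[·,·],α)` satisfies the
Hom-Leibniz identity. -/
theorem example_homLeibniz_identity (a11 a12 a13 a21 a22 a23 a33 : ℝ) :
    ∀ x y z : Fin 3 → ℝ,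
      br3 (alpha9 a11 a12 a13 a21 a22 a23 a33 x) (br3 y z)
        = br3 (br3 x y) (alpha9 a11 a12 a13 a21 a22 a23 a33 z)
          - br3 (br3 x z) (alpha9 a11 a12 a13 a21 a22 a23 a33 y) := by
  intro x y z
  rw [br3_eq_zero_of_apply_two (br3_apply_two y z), br3_br3, br3_br3, alpha9_apply_two,
    alpha9_apply_two, ← sub_smul]
  rw [show x 2 * y 2 * (a33 * z 2) - x 2 * z 2 * (a33 * y 2) = 0 by ring, zero_smul]
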